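/- Fix nonzero reals α and δ and integers 1 ≤ r ≤ n. With S_a(n,k) = (1/(a^k k!)) Σ_{j=0}^{k} (−1)^j binom(k,j)(−ja)_n, the generalized Stirling numbers satisfy the composition law S_{αδ}(n,r) = Σ_{k=r}^n α^{k−r} S_α(n,k) S_δ(k,r). -/

import Mathlib

/-!
Up to the factor `(-1) ^ k / k !`, the number `a ^ k * S_a(n,k)` is the `k`-th forward
difference at `0` of the polynomial `y ↦ (-y a)_n`, so Newton's interpolation formula gives the
expansion `(-y a)_n = ∑ₖ aᵏ S_a(n,k) (-y)_k` in rising factorials. Taking `a = α` at the point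
`δ y` expresses `(-y αδ)_n` through the polynomials `(-y δ)_k`, and the alternating sum defining
`S_{αδ}(n,r)`, applied term by term, produces `α^{k-r} S_α(n,k) S_δ(k,r)`. The terms with `k < r`
vanish since `(-y δ)_k` has degree `k < r`, which the `r`-th difference kills.
-/

open Finset

/-- generalized Stirling number S_a(n,k) of Pitman -/
noncomputable def genStirling (a : ℝ) (n k : ℕ) : ℝ :=
  (1 / (a ^ k * (Nat.factorial k : ℝ))) *
    ∑ j ∈ Finset.range (k + 1),
      (-1 : ℝ) ^ j * (Nat.choose k j : ℝ) * ∏ i ∈ Finset.range n, (-(j : ℝ) * a + i)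

open Polynomial fwdDiff
open scoped Nat

theorem sum_range_neg_one_pow_mul_choose_mul_eq_fwdDiff_iter {R : Type*} [CommRing R]
    (f : R → R) (k : ℕ) :
    ∑ j ∈ range (k + 1), (-1) ^ j * (k.choose j : R) * f j = (-1) ^ k * Δ_[1] ^[k] f 0 := by
  rw [fwdDiff_iter_eq_sum_shift, mul_sum]
  refine sum_congr rfl fun j hj => ?_
  obtain ⟨i, rfl⟩ := Nat.exists_eq_add_of_le (Nat.lt_succ_iff.mp (mem_range.mp hj))
  simp only [zero_add, nsmul_eq_mul, mul_one, zsmul_eq_mul, Nat.add_sub_cancel_left, pow_add]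
  push_cast
  ring_nf
  simp

theorem ascPochhammer_eval_eq_prod_range {R : Type*} [CommSemiring R] (n : ℕ) (r : R) :
    (ascPochhammer R n).eval r = ∏ i ∈ range n, (r + i) := by
  induction n with
  | zero => simp
  | succ n ih => simp [ascPochhammer_succ_right, ih, prod_range_succ]

theorem Polynomial.eval_eq_sum_range_fwdDiff_iter {K : Type*} [Field K] [CharZero K] (P : K[X])
    {n : ℕ} (hP : P.natDegree ≤ n) (x : K) :
    P.eval x
      = ∑ k ∈ range (n + 1), Δ_[1] ^[k] P.eval 0 / k ! * (descPochhammer K k).eval x := by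
  set Q : K[X] := ∑ k ∈ range (n + 1), C (Δ_[1] ^[k] P.eval 0 / k !) * descPochhammer K k
  have hPQ : P = Q := by
    refine eq_of_infinite_eval_eq P Q
      ((Set.infinite_range_of_injective Nat.cast_injective).mono ?_)
    rintro _ ⟨m, rfl⟩
    -- both sides are truncations of the Gregory–Newton sum at `m`: `m.choose k = 0` for `k > m`,
    -- and `Δ^[k] P = 0` for `k > n`
    have hP_nat : P.eval (m : K)
        = ∑ k ∈ range (n + m + 1), (m.choose k : K) * Δ_[1] ^[k] P.eval 0 :=
      calc P.eval (m : K) = ∑ k ∈ range (m + 1), (m.choose k : K) * Δ_[1] ^[k] P.eval 0 := by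
            simpa using shift_eq_sum_fwdDiff_iter 1 P.eval m 0
        _ = _ := sum_subset (range_subset_range.2 (by omega)) fun k _ hk => by
            rw [Nat.choose_eq_zero_of_lt (by simpa using hk), Nat.cast_zero, zero_mul]
    have hQ_nat : Q.eval (m : K)
        = ∑ k ∈ range (n + m + 1), (m.choose k : K) * Δ_[1] ^[k] P.eval 0 := by
      simp only [Q, eval_finsetSum, eval_mul, eval_C, descPochhammer_eval_eq_descFactorial,
        Nat.descFactorial_eq_factorial_mul_choose]
      refine sum_subset (range_subset_range.2 (by omega)) (fun k _ hk => ?_) |>.trans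
        (sum_congr rfl fun k _ => ?_)
      · rw [fwdDiff_iter_eq_zero_of_degree_lt (by simp at hk; omega)]
        simp
      · have hk : (k ! : K) ≠ 0 := Nat.cast_ne_zero.2 k.factorial_ne_zero
        push_cast
        field_simp
    exact hP_nat.trans hQ_nat.symm
  rw [congrArg (eval x) hPQ]
  simp only [Q, eval_finsetSum, eval_mul, eval_C]

section ScaledAscPochhammer

variable {R : Type*} [CommRing R]

noncomputable def scaledAscPochhammer (a : R) (n : ℕ) : R[X] :=
  (ascPochhammer R n).comp (C (-a) * X)

theorem scaledAscPochhammer_eval (a : R) (n : ℕ) (y : R) :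
    (scaledAscPochhammer a n).eval y = ∏ i ∈ range n, (-y * a + i) := by
  simp only [scaledAscPochhammer, eval_comp, eval_mul, eval_C, eval_X,
    ascPochhammer_eval_eq_prod_range, neg_mul_comm, mul_comm (-a)]

theorem natDegree_scaledAscPochhammer_le [IsDomain R] (a : R) (n : ℕ) :
    (scaledAscPochhammer a n).natDegree ≤ n :=
  natDegree_comp_le.trans <| by
    simpa using Nat.mul_le_mul (ascPochhammer_natDegree R n).le
      ((natDegree_C_mul_le (-a) X).trans natDegree_X_le)

end ScaledAscPochhammer

theorem genStirling_eq_fwdDiff_iter (a : ℝ) (n k : ℕ) :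
    genStirling a n k
      = (-1) ^ k * Δ_[1] ^[k] (scaledAscPochhammer a n).eval 0 / (a ^ k * k !) := by
  rw [genStirling, ← sum_range_neg_one_pow_mul_choose_mul_eq_fwdDiff_iter]
  simp only [scaledAscPochhammer_eval]
  ring

theorem genStirling_eq_zero_of_lt (a : ℝ) {n k : ℕ} (h : n < k) : genStirling a n k = 0 := by
  rw [genStirling_eq_fwdDiff_iter,
    fwdDiff_iter_eq_zero_of_degree_lt ((natDegree_scaledAscPochhammer_le a n).trans_lt h)]
  simp

theorem prod_range_neg_mul_add_eq_sum_genStirling {a : ℝ} (ha : a ≠ 0) (n : ℕ) (y : ℝ) :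
    ∏ i ∈ range n, (-y * a + i)
      = ∑ k ∈ range (n + 1), a ^ k * genStirling a n k * ∏ i ∈ range k, (-y + i) := by
  rw [← scaledAscPochhammer_eval,
    eval_eq_sum_range_fwdDiff_iter _ (natDegree_scaledAscPochhammer_le a n)]
  refine sum_congr rfl fun k _ => ?_
  rw [genStirling_eq_fwdDiff_iter, ← ascPochhammer_eval_eq_prod_range,
    ascPochhammer_eval_neg_eq_descPochhammer]
  field_simp
  rw [← pow_mul, pow_mul', neg_one_sq, one_pow, mul_one]

theorem genStirling_mul_eq_sum_range {α : ℝ} (hα : α ≠ 0) (δ : ℝ) (n r : ℕ) :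
    genStirling (α * δ) n r
      = ∑ k ∈ range (n + 1), α ^ k / α ^ r * genStirling α n k * genStirling δ k r := by
  have hexpand (j : ℕ) : ∏ i ∈ range n, (-(j : ℝ) * (α * δ) + i) = ∑ k ∈ range (n + 1),
      α ^ k * genStirling α n k * ∏ i ∈ range k, (-(j : ℝ) * δ + i) := by
    simpa only [neg_mul, mul_assoc, mul_comm α] using
      prod_range_neg_mul_add_eq_sum_genStirling hα n (j * δ)
  rw [genStirling.eq_1 (α * δ)]
  simp_rw [hexpand, mul_sum]
  rw [sum_comm]
  refine sum_congr rfl fun k _ => ?_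
  rw [genStirling.eq_1 δ, mul_sum, mul_sum]
  refine sum_congr rfl fun j _ => ?_
  simp only [mul_inv, mul_pow, div_eq_mul_inv]
  ring

theorem genStirling_composition_general (α δ : ℝ) (hα : α ≠ 0)
    (n r : ℕ) :
    genStirling (α * δ) n r
      = ∑ k ∈ Finset.Icc r n, α ^ (k - r) * genStirling α n k * genStirling δ k r := by
  calc genStirling (α * δ) n r
      = ∑ k ∈ range (n + 1), α ^ k / α ^ r * genStirling α n k * genStirling δ k r :=
        genStirling_mul_eq_sum_range hα δ n r
    _ = ∑ k ∈ Icc r n, α ^ k / α ^ r * genStirling α n k * genStirling δ k r := by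
        refine (sum_subset (fun k hk => ?_) fun k hk hk' => ?_).symm
        · exact mem_range.2 (Nat.lt_succ_of_le (mem_Icc.1 hk).2)
        · rw [genStirling_eq_zero_of_lt δ (by simp_all), mul_zero]
    _ = _ := sum_congr rfl fun k hk => by rw [pow_sub₀ α hα (mem_Icc.1 hk).1, div_eq_mul_inv]

/-- composition law for generalized Stirling numbers:
S_{αδ}(n,r) = Σ_{k=r}^n α^{k−r} S_α(n,k) S_δ(k,r). -/
theorem genStirling_composition (α δ : ℝ) (hα : α ≠ 0) (hδ : δ ≠ 0)
    (n r : ℕ) (hr : 1 ≤ r) (hrn : r ≤ n) :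
    genStirling (α * δ) n r
      = ∑ k ∈ Finset.Icc r n, α ^ (k - r) * genStirling α n k * genStirling δ k r :=
  genStirling_composition_general α δ hα n r
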